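/- arXiv:2009.00176 — 2 statements merged into one kernel-verified Lean document; each statement's English description precedes it below -/
import Mathlib

section
/- Let A be a formula of L, x a variable, ȳ the list of free variables of A, and z̄ the list of free variables of ∀x A. If ∀ȳ A^t is provable in Q∘S4.t, then ∀z̄ (∀x A)^t is provable in Q∘S4.t. -/
/-! ## Propositional intuitionistic formulas and IPC -/

inductive PropForm : Type
  | var : ℕ → PropForm
  | falsum : PropForm
  | and : PropForm → PropForm → PropForm
  | or : PropForm → PropForm → PropForm
  | impl : PropForm → PropForm → PropForm

/-- Hilbert-style intuitionistic propositional calculus. -/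
inductive IPC : PropForm → Prop
  | ax1 (A B : PropForm) : IPC (A.impl (B.impl A))
  | ax2 (A B C : PropForm) : IPC ((A.impl (B.impl C)).impl ((A.impl B).impl (A.impl C)))
  | andE1 (A B : PropForm) : IPC ((A.and B).impl A)
  | andE2 (A B : PropForm) : IPC ((A.and B).impl B)
  | andI (A B : PropForm) : IPC (A.impl (B.impl (A.and B)))
  | orI1 (A B : PropForm) : IPC (A.impl (A.or B))
  | orI2 (A B : PropForm) : IPC (B.impl (A.or B))
  | orE (A B C : PropForm) : IPC ((A.impl C).impl ((B.impl C).impl ((A.or B).impl C)))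
  | exfalso (A : PropForm) : IPC (PropForm.falsum.impl A)
  | mp (A B : PropForm) : IPC (A.impl B) → IPC A → IPC B

/-! ## Bimodal propositional formulas and S4.t -/

inductive BForm : Type
  | var : ℕ → BForm
  | falsum : BForm
  | impl : BForm → BForm → BForm
  | boxF : BForm → BForm
  | boxP : BForm → BForm

def BForm.neg (A : BForm) : BForm := A.impl .falsum
def BForm.diaF (A : BForm) : BForm := (A.neg.boxF).neg
def BForm.diaP (A : BForm) : BForm := (A.neg.boxP).neg

/-- The tense propositional logic S4.t: classical propositional logic, S4 axioms
for both `boxF` and `boxP`, the two tense axioms, MP and both necessitations. -/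
inductive S4t : BForm → Prop
  | ax1 (A B : BForm) : S4t (A.impl (B.impl A))
  | ax2 (A B C : BForm) : S4t ((A.impl (B.impl C)).impl ((A.impl B).impl (A.impl C)))
  | ax3 (A B : BForm) : S4t (((B.neg).impl (A.neg)).impl (A.impl B))
  | kF (A B : BForm) : S4t ((A.impl B).boxF.impl (A.boxF.impl B.boxF))
  | tF (A : BForm) : S4t (A.boxF.impl A)
  | fourF (A : BForm) : S4t (A.boxF.impl A.boxF.boxF)
  | kP (A B : BForm) : S4t ((A.impl B).boxP.impl (A.boxP.impl B.boxP))
  | tP (A : BForm) : S4t (A.boxP.impl A)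
  | fourP (A : BForm) : S4t (A.boxP.impl A.boxP.boxP)
  | tense1 (A : BForm) : S4t (A.impl A.diaF.boxP)
  | tense2 (A : BForm) : S4t (A.impl A.diaP.boxF)
  | mp (A B : BForm) : S4t (A.impl B) → S4t A → S4t B
  | necF (A : BForm) : S4t A → S4t A.boxF
  | necP (A : BForm) : S4t A → S4t A.boxP

/-! ## Predicate tense formulas (the language L_T) -/

/-- Formulas of the bimodal predicate language `L_T`.  The classical basis means
that `⊥, →, ∀, □F, □P` are primitive; the remaining connectives are the usual
classical abbreviations, defined below. -/
inductive TForm : Type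
  | falsum : TForm
  | atom : ℕ → List ℕ → TForm
  | impl : TForm → TForm → TForm
  | all : ℕ → TForm → TForm
  | boxF : TForm → TForm
  | boxP : TForm → TForm

def TForm.neg (A : TForm) : TForm := A.impl .falsum
def TForm.and (A B : TForm) : TForm := (A.impl B.neg).neg
def TForm.or (A B : TForm) : TForm := (A.neg).impl B
def TForm.iff (A B : TForm) : TForm := (A.impl B).and (B.impl A)
def TForm.ex (x : ℕ) (A : TForm) : TForm := (TForm.all x A.neg).neg
def TForm.diaF (A : TForm) : TForm := A.neg.boxF.neg
def TForm.diaP (A : TForm) : TForm := A.neg.boxP.neg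

def TForm.freeVars : TForm → Finset ℕ
  | .falsum => ∅
  | .atom _ args => args.toFinset
  | .impl A B => A.freeVars ∪ B.freeVars
  | .all x A => A.freeVars.erase x
  | .boxF A => A.freeVars
  | .boxP A => A.freeVars

/-- Replace every free occurrence of the variable `x` by `y`. -/
def TForm.subst (x y : ℕ) : TForm → TForm
  | .falsum => .falsum
  | .atom p args => .atom p (args.map fun v => if v = x then y else v)
  | .impl A B => .impl (A.subst x y) (B.subst x y)
  | .all z A => if z = x then .all z A else .all z (A.subst x y)
  | .boxF A => .boxF (A.subst x y)
  | .boxP A => .boxP (A.subst x y)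

/-- `y` is substitutable for `x`: no free occurrence of `x` lies in the scope of
a quantifier binding `y`. -/
def TForm.substOK (x y : ℕ) : TForm → Prop
  | .falsum => True
  | .atom _ _ => True
  | .impl A B => A.substOK x y ∧ B.substOK x y
  | .all z A => z = x ∨ ((z = y → x ∉ A.freeVars) ∧ A.substOK x y)
  | .boxF A => A.substOK x y
  | .boxP A => A.substOK x y

/-- Substitution of `L_T`-formulas for the propositional letters of a bimodal
propositional formula. -/
def BForm.tsubst (s : ℕ → TForm) : BForm → TForm
  | .var n => s n
  | .falsum => .falsum
  | .impl A B => .impl (A.tsubst s) (B.tsubst s)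
  | .boxF A => .boxF (A.tsubst s)
  | .boxP A => .boxP (A.tsubst s)

/-! ## The predicate tense logic Q∘S4.t -/

inductive QoS4t : TForm → Prop
  /-- all substitution instances of theorems of S4.t -/
  | s4t (φ : BForm) (s : ℕ → TForm) : S4t φ → QoS4t (φ.tsubst s)
  /-- (UI°)  ∀y(∀x A → A(y/x)) -/
  | ui (x y : ℕ) (A : TForm) (hok : A.substOK x y) :
      QoS4t (.all y ((TForm.all x A).impl (A.subst x y)))
  /-- ∀x(A → B) → (∀x A → ∀x B) -/
  | distrib (x : ℕ) (A B : TForm) :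
      QoS4t ((TForm.all x (A.impl B)).impl ((TForm.all x A).impl (TForm.all x B)))
  /-- ∀x∀y A ↔ ∀y∀x A -/
  | comm (x y : ℕ) (A : TForm) :
      QoS4t ((TForm.all x (TForm.all y A)).iff (TForm.all y (TForm.all x A)))
  /-- A → ∀x A, x not free in A -/
  | vac (x : ℕ) (A : TForm) (h : x ∉ A.freeVars) : QoS4t (A.impl (.all x A))
  /-- (NID)  ∀x A → A, x not free in A -/
  | nid (x : ℕ) (A : TForm) (h : x ∉ A.freeVars) : QoS4t ((TForm.all x A).impl A)
  /-- (CBF_F)  □F ∀x A → ∀x □F A -/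
  | cbfF (x : ℕ) (A : TForm) : QoS4t ((TForm.all x A).boxF.impl (TForm.all x A.boxF))
  | mp (A B : TForm) : QoS4t (A.impl B) → QoS4t A → QoS4t B
  | gen (x : ℕ) (A : TForm) : QoS4t A → QoS4t (.all x A)
  | necF (A : TForm) : QoS4t A → QoS4t A.boxF
  | necP (A : TForm) : QoS4t A → QoS4t A.boxP

/-! ## The language L of intuitionistic predicate logic and IQC -/

inductive IForm : Type
  | falsum : IForm
  | atom : ℕ → List ℕ → IForm
  | and : IForm → IForm → IForm
  | or : IForm → IForm → IForm
  | impl : IForm → IForm → IForm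
  | all : ℕ → IForm → IForm
  | ex : ℕ → IForm → IForm

def IForm.freeVars : IForm → Finset ℕ
  | .falsum => ∅
  | .atom _ args => args.toFinset
  | .and A B => A.freeVars ∪ B.freeVars
  | .or A B => A.freeVars ∪ B.freeVars
  | .impl A B => A.freeVars ∪ B.freeVars
  | .all x A => A.freeVars.erase x
  | .ex x A => A.freeVars.erase x

def IForm.subst (x y : ℕ) : IForm → IForm
  | .falsum => .falsum
  | .atom p args => .atom p (args.map fun v => if v = x then y else v)
  | .and A B => .and (A.subst x y) (B.subst x y)
  | .or A B => .or (A.subst x y) (B.subst x y)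
  | .impl A B => .impl (A.subst x y) (B.subst x y)
  | .all z A => if z = x then .all z A else .all z (A.subst x y)
  | .ex z A => if z = x then .ex z A else .ex z (A.subst x y)

def IForm.substOK (x y : ℕ) : IForm → Prop
  | .falsum => True
  | .atom _ _ => True
  | .and A B => A.substOK x y ∧ B.substOK x y
  | .or A B => A.substOK x y ∧ B.substOK x y
  | .impl A B => A.substOK x y ∧ B.substOK x y
  | .all z A => z = x ∨ ((z = y → x ∉ A.freeVars) ∧ A.substOK x y)
  | .ex z A => z = x ∨ ((z = y → x ∉ A.freeVars) ∧ A.substOK x y)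

/-- Substitution of `L`-formulas for the propositional letters of an
intuitionistic propositional formula. -/
def PropForm.isubst (s : ℕ → IForm) : PropForm → IForm
  | .var n => s n
  | .falsum => .falsum
  | .and A B => .and (A.isubst s) (B.isubst s)
  | .or A B => .or (A.isubst s) (B.isubst s)
  | .impl A B => .impl (A.isubst s) (B.isubst s)

/-- The intuitionistic predicate calculus IQC. -/
inductive IQC : IForm → Prop
  /-- all substitution instances of theorems of IPC -/
  | ipc (φ : PropForm) (s : ℕ → IForm) : IPC φ → IQC (φ.isubst s)
  /-- (UI)  ∀x A → A(y/x) -/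
  | ui (x y : ℕ) (A : IForm) (hok : A.substOK x y) :
      IQC ((IForm.all x A).impl (A.subst x y))
  /-- A(y/x) → ∃x A -/
  | exI (x y : ℕ) (A : IForm) (hok : A.substOK x y) :
      IQC ((A.subst x y).impl (IForm.ex x A))
  /-- ∀x(A → B) → (A → ∀x B), x not free in A -/
  | allImp (x : ℕ) (A B : IForm) (h : x ∉ A.freeVars) :
      IQC ((IForm.all x (A.impl B)).impl (A.impl (IForm.all x B)))
  /-- ∀x(A → B) → (∃x A → B), x not free in B -/
  | exImp (x : ℕ) (A B : IForm) (h : x ∉ B.freeVars) :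
      IQC ((IForm.all x (A.impl B)).impl ((IForm.ex x A).impl B))
  | mp (A B : IForm) : IQC (A.impl B) → IQC A → IQC B
  | gen (x : ℕ) (A : IForm) : IQC A → IQC (.all x A)

/-! ## The temporal Gödel translation -/

def IForm.t : IForm → TForm
  | .falsum => .falsum
  | .atom p args => .boxF (.atom p args)
  | .and A B => TForm.and A.t B.t
  | .or A B => TForm.or A.t B.t
  | .impl A B => .boxF (A.t.impl B.t)
  | .all x A => .boxF (.all x A.t)
  | .ex x A => TForm.diaP (TForm.ex x A.t)

/-- `closure [x₁,…,xₙ] A = ∀x₁ ⋯ ∀xₙ A`. -/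
def TForm.closure (xs : List ℕ) (A : TForm) : TForm := xs.foldr TForm.all A

/-! ## Generalized Kripke semantics for Q∘S4.t -/

/-- A Q∘S4.t-frame: a reflexive transitive relation on a nonempty set of worlds,
a nonempty constant outer domain `U`, and nonempty increasing inner domains. -/
structure TFrame where
  W : Type
  U : Type
  hW : Nonempty W
  hU : Nonempty U
  R : W → W → Prop
  refl : ∀ w, R w w
  trans : ∀ {u v w}, R u v → R v w → R u w
  D : W → Set U
  Dne : ∀ w, (D w).Nonempty
  Dmono : ∀ {w v}, R w v → D w ⊆ D v

/-- A model based on a Q∘S4.t-frame: interprets each predicate symbol at each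
world as a relation on the outer domain. -/
structure TModel (F : TFrame) where
  I : F.W → ℕ → List F.U → Prop

/-- Truth of an `L_T`-formula at a world under an assignment. -/
def TModel.truth {F : TFrame} (M : TModel F) : F.W → (ℕ → F.U) → TForm → Prop
  | _, _, .falsum => False
  | w, σ, .atom p args => M.I w p (args.map σ)
  | w, σ, .impl A B => M.truth w σ A → M.truth w σ B
  | w, σ, .all x A =>
      ∀ τ : ℕ → F.U, (∀ y, y ≠ x → τ y = σ y) → τ x ∈ F.D w → M.truth w τ A
  | w, σ, .boxF A => ∀ v, F.R w v → M.truth v σ A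
  | w, σ, .boxP A => ∀ v, F.R v w → M.truth v σ A

/-- Validity of an `L_T`-formula in a Q∘S4.t-frame. -/
def TFrame.valid (F : TFrame) (A : TForm) : Prop :=
  ∀ M : TModel F, ∀ w : F.W, ∀ σ : ℕ → F.U, M.truth w σ A

/-! ## Kripke semantics for IQC -/

/-- An IQC-frame: a partial order on a nonempty set of worlds with nonempty
increasing domains. -/
structure IFrame where
  W : Type
  α : Type
  hW : Nonempty W
  R : W → W → Prop
  refl : ∀ w, R w w
  trans : ∀ {u v w}, R u v → R v w → R u w
  antisymm : ∀ {u v}, R u v → R v u → u = v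
  D : W → Set α
  Dne : ∀ w, (D w).Nonempty
  Dmono : ∀ {w v}, R w v → D w ⊆ D v

/-- An IQC-model: `I w P ⊆ (D w)ⁿ`, increasing along `R`. -/
structure IModel (F : IFrame) where
  I : F.W → ℕ → List F.α → Prop
  Isub : ∀ w p as, I w p as → ∀ a ∈ as, a ∈ F.D w
  Imono : ∀ {w v} (p : ℕ) (as : List F.α), F.R w v → I w p as → I v p as

/-- Intuitionistic truth of an `L`-formula at a world under an assignment. -/
def IModel.truth {F : IFrame} (M : IModel F) : F.W → (ℕ → F.α) → IForm → Prop
  | _, _, .falsum => False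
  | w, σ, .atom p args => M.I w p (args.map σ)
  | w, σ, .and A B => M.truth w σ A ∧ M.truth w σ B
  | w, σ, .or A B => M.truth w σ A ∨ M.truth w σ B
  | w, σ, .impl A B => ∀ v, F.R w v → M.truth v σ A → M.truth v σ B
  | w, σ, .all x A =>
      ∀ v, F.R w v → ∀ τ : ℕ → F.α, (∀ y, y ≠ x → τ y = σ y) → τ x ∈ F.D v →
        M.truth v τ A
  | w, σ, .ex x A =>
      ∃ τ : ℕ → F.α, (∀ y, y ≠ x → τ y = σ y) ∧ τ x ∈ F.D w ∧ M.truth w τ A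

/-! ## The associated Q∘S4.t-model M̄ -/

/-- The Q∘S4.t-frame associated to an IQC-frame: same worlds and relation,
outer domain `U = ⋃ { D_w ∣ w ∈ W }`, same inner domains. -/
def IFrame.bar (F : IFrame) : TFrame where
  W := F.W
  U := {a : F.α // ∃ w, a ∈ F.D w}
  hW := F.hW
  hU := by
    obtain ⟨w⟩ := F.hW
    obtain ⟨a, ha⟩ := F.Dne w
    exact ⟨⟨a, w, ha⟩⟩
  R := F.R
  refl := F.refl
  trans := F.trans
  D := fun w => {a | a.1 ∈ F.D w}
  Dne := fun w => by
    obtain ⟨a, ha⟩ := F.Dne w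
    exact ⟨⟨a, w, ha⟩, ha⟩
  Dmono := fun h _ ha => F.Dmono h ha

/-- The Q∘S4.t-model `M̄` associated to an IQC-model `M`. -/
def IModel.bar {F : IFrame} (M : IModel F) : TModel F.bar where
  I := fun w p as => M.I w p (as.map Subtype.val)

/-! Generalizing `∀ȳ A^t` over `x` yields a closure of `A^t` over the variables of `∀x A`
together with `x`. Closures over lists with the same set of variables are interderivable,
since quantifiers commute and a repeated quantifier is vacuous, so the quantifier on `x` can
be moved innermost. Necessitation and (CBF_F) then push `□F` through the remaining closure,
giving `∀z̄ □F ∀x A^t`. -/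

namespace S4t

theorem imp_self (A : BForm) : S4t (A.impl A) :=
  mp _ _ (mp _ _ (ax2 A (A.impl A) A) (ax1 A (A.impl A))) (ax1 A A)

theorem syl (A B C : BForm) : S4t ((B.impl C).impl ((A.impl B).impl (A.impl C))) :=
  mp _ _ (mp _ _ (ax2 _ _ _) (mp _ _ (ax1 _ _) (ax2 A B C))) (ax1 (B.impl C) A)

theorem imp_trans {A B C : BForm} (h₁ : S4t (A.impl B)) (h₂ : S4t (B.impl C)) :
    S4t (A.impl C) :=
  mp _ _ (mp _ _ (syl A B C) h₂) h₁

theorem imp_intro {A B : BForm} (h : S4t B) : S4t (A.impl B) :=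
  mp _ _ (ax1 B A) h

theorem imp_swap {A B C : BForm} (h : S4t (A.impl (B.impl C))) : S4t (B.impl (A.impl C)) :=
  imp_trans (ax1 B A) (mp _ _ (ax2 A B C) h)

theorem falsum_imp (A : BForm) : S4t (BForm.falsum.impl A) :=
  mp _ _ (ax3 .falsum A) (imp_intro (imp_self .falsum))

theorem neg_imp (A B : BForm) : S4t (A.neg.impl (A.impl B)) :=
  mp _ _ (syl A .falsum B) (falsum_imp B)

theorem imp_neg_neg (A : BForm) : S4t (A.impl A.neg.neg) :=
  imp_swap (imp_self A.neg)

theorem and_left (A B : BForm) : S4t ((A.impl B.neg).neg.impl A) :=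
  mp _ _ (ax3 _ A) (imp_trans (neg_imp A B.neg) (imp_neg_neg (A.impl B.neg)))

end S4t

namespace TForm

theorem freeVars_closure (l : List ℕ) (A : TForm) :
    (closure l A).freeVars = A.freeVars \ l.toFinset := by
  induction l with
  | nil => simp [closure]
  | cons a l ih => simp [closure, freeVars, ← ih, Finset.sdiff_insert]

theorem closure_append (l₁ l₂ : List ℕ) (A : TForm) :
    closure (l₁ ++ l₂) A = closure l₁ (closure l₂ A) := by
  simp [closure, List.foldr_append]

end TForm

namespace QoS4t

open TForm

theorem imp_self (A : TForm) : QoS4t (A.impl A) :=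
  s4t _ (fun _ => A) (S4t.imp_self (.var 0))

/- The letters `var i` are instantiated through `List.getD`, so that `BForm.tsubst` reduces to
the intended formula by `rfl`. -/
theorem imp_trans {A B C : TForm} (h₁ : QoS4t (A.impl B)) (h₂ : QoS4t (B.impl C)) :
    QoS4t (A.impl C) :=
  mp _ _ (mp _ _ (s4t _ ([A, B, C].getD · .falsum) (S4t.syl (.var 0) (.var 1) (.var 2))) h₂) h₁

theorem and_left {A B : TForm} (h : QoS4t (A.and B)) : QoS4t A :=
  mp _ _ (s4t _ ([A, B].getD · .falsum) (S4t.and_left (.var 0) (.var 1))) h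

theorem all_comm (x y : ℕ) (A : TForm) : QoS4t ((all x (all y A)).impl (all y (all x A))) :=
  and_left (comm x y A)

theorem all_mono (x : ℕ) {A B : TForm} (h : QoS4t (A.impl B)) :
    QoS4t ((all x A).impl (all x B)) :=
  mp _ _ (distrib x A B) (gen x _ h)

theorem boxF_closure_imp (l : List ℕ) (A : TForm) :
    QoS4t ((closure l A).boxF.impl (closure l A.boxF)) := by
  induction l with
  | nil => exact imp_self _
  | cons a l ih => exact imp_trans (cbfF a (closure l A)) (all_mono a ih)

theorem closure_imp_of_perm {A : TForm} {l₁ l₂ : List ℕ} (hp : l₁.Perm l₂) :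
    QoS4t ((closure l₁ A).impl (closure l₂ A)) := by
  induction hp with
  | nil => exact imp_self _
  | cons a _ ih => exact all_mono a ih
  | swap a b l => exact all_comm b a (closure l A)
  | trans _ _ ih₁ ih₂ => exact imp_trans ih₁ ih₂

theorem notMem_freeVars_closure {a : ℕ} {l : List ℕ} (A : TForm) (ha : a ∈ l) :
    a ∉ (closure l A).freeVars := by
  simp [freeVars_closure, ha]

theorem closure_imp_closure_dedup (l : List ℕ) (A : TForm) :
    QoS4t ((closure l A).impl (closure l.dedup A)) := by
  induction l with
  | nil => exact imp_self _
  | cons a l ih =>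
    by_cases ha : a ∈ l
    · rw [List.dedup_cons_of_mem ha]
      exact imp_trans (all_mono a ih)
        (nid a _ (notMem_freeVars_closure A (List.mem_dedup.mpr ha)))
    · rw [List.dedup_cons_of_notMem ha]
      exact all_mono a ih

theorem closure_dedup_imp_closure (l : List ℕ) (A : TForm) :
    QoS4t ((closure l.dedup A).impl (closure l A)) := by
  induction l with
  | nil => exact imp_self _
  | cons a l ih =>
    by_cases ha : a ∈ l
    · rw [List.dedup_cons_of_mem ha]
      exact imp_trans ih (vac a _ (notMem_freeVars_closure A ha))
    · rw [List.dedup_cons_of_notMem ha]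
      exact all_mono a ih

theorem closure_imp_of_toFinset_eq {A : TForm} {l₁ l₂ : List ℕ}
    (h : l₁.toFinset = l₂.toFinset) : QoS4t ((closure l₁ A).impl (closure l₂ A)) := by
  have hp : l₁.dedup.Perm l₂.dedup :=
    List.perm_of_nodup_nodup_toFinset_eq (List.nodup_dedup _) (List.nodup_dedup _)
      (by ext a; simpa using Finset.ext_iff.mp h a)
  exact imp_trans (closure_imp_closure_dedup l₁ A)
    (imp_trans (closure_imp_of_perm hp) (closure_dedup_imp_closure l₂ A))

end QoS4t

theorem closure_translation_gen_general (A : IForm) (x : ℕ) (ys zs : List ℕ)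
    (hfvy : ys.toFinset = A.freeVars)
    (hfvz : zs.toFinset = (IForm.all x A).freeVars)
    (h : QoS4t (TForm.closure ys A.t)) :
    QoS4t (TForm.closure zs (IForm.all x A).t) := by
  have hvars : (x :: ys).toFinset = (zs ++ [x]).toFinset := by
    rw [List.toFinset_cons, List.toFinset_append, hfvy, hfvz, IForm.freeVars]
    ext a
    simp only [Finset.mem_insert, Finset.mem_union, Finset.mem_erase, List.mem_toFinset,
      List.mem_singleton]
    tauto
  have hgen : QoS4t (TForm.closure (zs ++ [x]) A.t) :=
    QoS4t.mp _ _ (QoS4t.closure_imp_of_toFinset_eq hvars) (QoS4t.gen x _ h)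
  rw [TForm.closure_append] at hgen
  exact QoS4t.mp _ _ (QoS4t.boxF_closure_imp zs _) (QoS4t.necF _ hgen)

/-- If `∀ȳ A^t` is provable in Q∘S4.t, where `ȳ` is the list of free variables
of `A` and `z̄` the list of free variables of `∀x A`, then `∀z̄ (∀x A)^t` is
provable in Q∘S4.t. -/
theorem closure_translation_gen (A : IForm) (x : ℕ) (ys zs : List ℕ)
    (hndy : ys.Nodup) (hfvy : ys.toFinset = A.freeVars)
    (hndz : zs.Nodup) (hfvz : zs.toFinset = (IForm.all x A).freeVars)
    (h : QoS4t (TForm.closure ys A.t)) :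
    QoS4t (TForm.closure zs (IForm.all x A).t) :=
  closure_translation_gen_general A x ys zs hfvy hfvz h
end

section
/- For all formulas A, B of L with x not free in A, the formula □_F(□_F ∀x □_F(A^t → B^t) → □_F(A^t → □_F ∀x B^t)) is provable in Q∘S4.t; and for all formulas A, B of L with x not free in B, the formula □_F(□_F ∀x □_F(A^t → B^t) → □_F(◇_P ∃x A^t → B^t)) is provable in Q∘S4.t. -/
/-! ## Auxiliary machinery -/

lemma qos_inst (φ : BForm) (s : ℕ → TForm) (h : S4t φ) : QoS4t (φ.tsubst s) :=
  QoS4t.s4t φ s h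

section transfers
variable (A B C : TForm)

lemma q_ax1 : QoS4t (A.impl (B.impl A)) :=
  qos_inst ((BForm.var 0).impl ((BForm.var 1).impl (BForm.var 0)))
    (fun n => if n = 0 then A else B) (S4t.ax1 _ _)

lemma q_ax2 : QoS4t ((A.impl (B.impl C)).impl ((A.impl B).impl (A.impl C))) :=
  qos_inst (((BForm.var 0).impl ((BForm.var 1).impl (BForm.var 2))).impl
      (((BForm.var 0).impl (BForm.var 1)).impl ((BForm.var 0).impl (BForm.var 2))))
    (fun n => if n = 0 then A else if n = 1 then B else C) (S4t.ax2 _ _ _)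

lemma q_ax3 : QoS4t (((B.neg).impl (A.neg)).impl (A.impl B)) :=
  qos_inst ((((BForm.var 1).neg).impl ((BForm.var 0).neg)).impl
      ((BForm.var 0).impl (BForm.var 1)))
    (fun n => if n = 0 then A else B) (S4t.ax3 _ _)

lemma q_kF : QoS4t ((A.impl B).boxF.impl (A.boxF.impl B.boxF)) :=
  qos_inst (((BForm.var 0).impl (BForm.var 1)).boxF.impl
      ((BForm.var 0).boxF.impl (BForm.var 1).boxF))
    (fun n => if n = 0 then A else B) (S4t.kF _ _)

lemma q_tF : QoS4t (A.boxF.impl A) :=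
  qos_inst ((BForm.var 0).boxF.impl (BForm.var 0)) (fun _ => A) (S4t.tF _)

lemma q_fourF : QoS4t (A.boxF.impl A.boxF.boxF) :=
  qos_inst ((BForm.var 0).boxF.impl (BForm.var 0).boxF.boxF) (fun _ => A) (S4t.fourF _)

lemma q_kP : QoS4t ((A.impl B).boxP.impl (A.boxP.impl B.boxP)) :=
  qos_inst (((BForm.var 0).impl (BForm.var 1)).boxP.impl
      ((BForm.var 0).boxP.impl (BForm.var 1).boxP))
    (fun n => if n = 0 then A else B) (S4t.kP _ _)

lemma q_tP : QoS4t (A.boxP.impl A) :=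
  qos_inst ((BForm.var 0).boxP.impl (BForm.var 0)) (fun _ => A) (S4t.tP _)

lemma q_fourP : QoS4t (A.boxP.impl A.boxP.boxP) :=
  qos_inst ((BForm.var 0).boxP.impl (BForm.var 0).boxP.boxP) (fun _ => A) (S4t.fourP _)

lemma q_tense1 : QoS4t (A.impl A.diaF.boxP) :=
  qos_inst ((BForm.var 0).impl (BForm.var 0).diaF.boxP) (fun _ => A) (S4t.tense1 _)

lemma q_tense2 : QoS4t (A.impl A.diaP.boxF) :=
  qos_inst ((BForm.var 0).impl (BForm.var 0).diaP.boxF) (fun _ => A) (S4t.tense2 _)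

lemma q_id : QoS4t (A.impl A) :=
  QoS4t.mp _ _ (QoS4t.mp _ _ (q_ax2 A (A.impl A) A) (q_ax1 A (A.impl A))) (q_ax1 A A)

end transfers

/-! ### Derivations from hypotheses -/

inductive QCtx (Γ : List TForm) : TForm → Prop
  | ax {A} : QoS4t A → QCtx Γ A
  | hyp {A} : A ∈ Γ → QCtx Γ A
  | mp {A B} : QCtx Γ (A.impl B) → QCtx Γ A → QCtx Γ B

lemma QCtx.ded {Γ : List TForm} {A B : TForm} (h : QCtx (A :: Γ) B) :
    QCtx Γ (A.impl B) := by
  induction h with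
  | ax h => exact .mp (.ax (q_ax1 _ _)) (.ax h)
  | hyp h =>
    rcases List.mem_cons.mp h with rfl | h
    · exact .ax (q_id _)
    · exact .mp (.ax (q_ax1 _ _)) (.hyp h)
  | mp _ _ ih1 ih2 => exact .mp (.mp (.ax (q_ax2 _ _ _)) ih1) ih2

lemma QCtx.toThm {A : TForm} (h : QCtx [] A) : QoS4t A := by
  induction h with
  | ax h => exact h
  | hyp h => simp at h
  | mp _ _ ih1 ih2 => exact QoS4t.mp _ _ ih1 ih2

lemma q_exf (A : TForm) : QoS4t (TForm.falsum.impl A) := by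
  have h1 : QoS4t ((A.neg).impl (TForm.falsum.neg)) :=
    QoS4t.mp _ _ (q_ax1 (TForm.falsum.neg) (A.neg)) (q_id TForm.falsum)
  exact QoS4t.mp _ _ (q_ax3 TForm.falsum A) h1

lemma QCtx.exf {Γ : List TForm} {A : TForm} (h : QCtx Γ TForm.falsum) : QCtx Γ A :=
  .mp (.ax (q_exf A)) h

lemma q_dni (A : TForm) : QoS4t (A.impl A.neg.neg) :=
  QCtx.toThm <| .ded <| .ded <| .mp (.hyp (.head _)) (.hyp (.tail _ (.head _)))

lemma q_dne (A : TForm) : QoS4t (A.neg.neg.impl A) :=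
  QoS4t.mp _ _ (q_ax3 A.neg.neg A) (q_dni A.neg)

/-- Proof by contradiction at the context level. -/
lemma QCtx.bc {Γ : List TForm} {A : TForm} (h : QCtx (A.neg :: Γ) TForm.falsum) :
    QCtx Γ A :=
  .mp (.ax (q_dne A)) h.ded

lemma q_imp_trans {A B C : TForm} (h1 : QoS4t (A.impl B)) (h2 : QoS4t (B.impl C)) :
    QoS4t (A.impl C) :=
  QCtx.toThm <| .ded <| .mp (.ax h2) (.mp (.ax h1) (.hyp (.head _)))

lemma q_and1 (A B : TForm) : QoS4t ((A.and B).impl A) :=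
  QCtx.toThm <| .ded <| .bc <| by
    -- context: [¬A, A ∧ B]  where  A ∧ B = ¬(A → ¬B)
    have hAB : QCtx [A.neg, A.and B] ((A.impl B.neg)) :=
      .ded <| .exf (.mp (.hyp (.tail _ (.head _))) (.hyp (.head _)))
    exact .mp (.hyp (.tail _ (.head _))) hAB

lemma q_and2 (A B : TForm) : QoS4t ((A.and B).impl B) :=
  QCtx.toThm <| .ded <| .bc <| by
    -- context: [¬B, A ∧ B]
    have hAB : QCtx [B.neg, A.and B] ((A.impl B.neg)) :=
      .mp (.ax (q_ax1 B.neg A)) (.hyp (.head _))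
    exact .mp (.hyp (.tail _ (.head _))) hAB

lemma q_andI (A B : TForm) : QoS4t (A.impl (B.impl (A.and B))) :=
  QCtx.toThm <| .ded <| .ded <| .ded <|
    -- context: [A → ¬B, B, A]
    .mp (.mp (.hyp (.head _)) (.hyp (.tail _ (.tail _ (.head _)))))
      (.hyp (.tail _ (.head _)))

lemma boxMonoF {A B : TForm} (h : QoS4t (A.impl B)) :
    QoS4t (A.boxF.impl B.boxF) :=
  QoS4t.mp _ _ (q_kF A B) (QoS4t.necF _ h)

lemma boxMonoP {A B : TForm} (h : QoS4t (A.impl B)) :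
    QoS4t (A.boxP.impl B.boxP) :=
  QoS4t.mp _ _ (q_kP A B) (QoS4t.necP _ h)

lemma allMono (x : ℕ) {A B : TForm} (h : QoS4t (A.impl B)) :
    QoS4t ((TForm.all x A).impl (TForm.all x B)) :=
  QoS4t.mp _ _ (QoS4t.distrib x A B) (QoS4t.gen x _ h)

/-! ### Substitution and free-variable lemmas -/

lemma subst_self (x : ℕ) (C : TForm) : C.subst x x = C := by
  induction C with
  | falsum => rfl
  | atom p args =>
    simp only [TForm.subst, TForm.atom.injEq, true_and]
    have : (fun v => if v = x then x else v) = fun v : ℕ => v := by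
      funext v; split <;> simp_all
    rw [this, List.map_id']
  | impl A B ihA ihB => simp [TForm.subst, ihA, ihB]
  | all z A ih => by_cases h : z = x <;> simp [TForm.subst, h, ih]
  | boxF A ih => simp [TForm.subst, ih]
  | boxP A ih => simp [TForm.subst, ih]

lemma substOK_self (x : ℕ) (C : TForm) : C.substOK x x := by
  induction C with
  | falsum => trivial
  | atom p args => trivial
  | impl A B ihA ihB => exact ⟨ihA, ihB⟩
  | all z A ih =>
    by_cases h : z = x
    · exact Or.inl h
    · exact Or.inr ⟨fun hzx => absurd hzx h, ih⟩
  | boxF A ih => exact ih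
  | boxP A ih => exact ih

lemma ui_self (x : ℕ) (C : TForm) :
    QoS4t (TForm.all x ((TForm.all x C).impl C)) := by
  have h := QoS4t.ui x x C (substOK_self x C)
  rwa [subst_self] at h

lemma t_freeVars (A : IForm) : A.t.freeVars = A.freeVars := by
  induction A with
  | falsum => rfl
  | atom p args => rfl
  | and A B ihA ihB =>
    simp [IForm.t, TForm.and, TForm.neg, TForm.freeVars, IForm.freeVars, ihA, ihB]
  | or A B ihA ihB =>
    simp [IForm.t, TForm.or, TForm.neg, TForm.freeVars, IForm.freeVars, ihA, ihB]
  | impl A B ihA ihB =>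
    simp [IForm.t, TForm.freeVars, IForm.freeVars, ihA, ihB]
  | all z A ih => simp [IForm.t, TForm.freeVars, IForm.freeVars, ih]
  | ex z A ih =>
    simp [IForm.t, TForm.diaP, TForm.ex, TForm.neg, TForm.freeVars, IForm.freeVars, ih]

/-! ### The translation lemma: `A^t → □F A^t` -/

lemma t_box (A : IForm) : QoS4t (A.t.impl A.t.boxF) := by
  induction A with
  | falsum => exact q_exf _
  | atom p args => exact q_fourF _
  | impl A B _ _ => exact q_fourF _
  | all z A _ => exact q_fourF _
  | and A B ihA ihB =>
    set p := A.t with hp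
    set q := B.t with hq
    show QoS4t ((p.and q).impl (p.and q).boxF)
    refine QCtx.toThm (QCtx.ded ?_)
    -- context: [p ∧ q]
    have hpq : QCtx [p.and q] p := .mp (.ax (q_and1 p q)) (.hyp (.head _))
    have hq' : QCtx [p.and q] q := .mp (.ax (q_and2 p q)) (.hyp (.head _))
    have bp : QCtx [p.and q] p.boxF := .mp (.ax ihA) hpq
    have bq : QCtx [p.and q] q.boxF := .mp (.ax ihB) hq'
    have c1 : QCtx [p.and q] ((q.impl (p.and q)).boxF) :=
      .mp (.mp (.ax (q_kF p (q.impl (p.and q)))) (.ax (QoS4t.necF _ (q_andI p q)))) bp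
    exact .mp (.mp (.ax (q_kF q (p.and q))) c1) bq
  | or A B ihA ihB =>
    set p := A.t with hp
    set q := B.t with hq
    show QoS4t ((p.or q).impl (p.or q).boxF)
    set Z := (p.or q).boxF with hZ
    have hpZ : QoS4t (p.impl Z) := by
      refine q_imp_trans ihA (boxMonoF ?_)
      exact QCtx.toThm <| .ded <| .ded <|
        .exf (.mp (.hyp (.head _)) (.hyp (.tail _ (.head _))))
    refine QCtx.toThm (QCtx.ded ?_)
    -- context: [p ∨ q] = [¬p → q]
    have hnpZ : QCtx [p.or q] ((p.neg).impl Z) := by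
      refine QCtx.ded ?_
      -- context: [¬p, ¬p → q]
      have hq2 : QCtx [p.neg, p.or q] q :=
        .mp (.hyp (.tail _ (.head _))) (.hyp (.head _))
      exact .mp (.ax (boxMonoF (q_ax1 q p.neg))) (.mp (.ax ihB) hq2)
    -- case split: (p → Z) → ((¬p → Z) → Z)
    have cs : QoS4t ((p.impl Z).impl (((p.neg).impl Z).impl Z)) := by
      refine QCtx.toThm (QCtx.ded (QCtx.ded (QCtx.bc ?_)))
      -- context: [¬Z, ¬p → Z, p → Z]
      have np : QCtx [Z.neg, (p.neg).impl Z, p.impl Z] p.neg := by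
        refine QCtx.ded ?_
        -- context: [p, ¬Z, ¬p → Z, p → Z]
        exact .mp (.hyp (.tail _ (.head _)))
          (.mp (.hyp (.tail _ (.tail _ (.tail _ (.head _))))) (.hyp (.head _)))
      exact .mp (.hyp (.head _)) (.mp (.hyp (.tail _ (.head _))) np)
    exact .mp (.mp (.ax cs) (.ax hpZ)) hnpZ
  | ex z A ihA =>
    set E := TForm.ex z A.t with hE
    show QoS4t (E.diaP.impl E.diaP.boxF)
    have s1 : QoS4t (E.diaP.impl E.diaP.diaP.boxF) := q_tense2 E.diaP
    have s2 : QoS4t (E.diaP.diaP.impl E.diaP) := by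
      refine QCtx.toThm (QCtx.ded (QCtx.bc ?_))
      -- context: [¬◇P E, ◇P◇P E]
      have b1 : QCtx [E.diaP.neg, E.diaP.diaP] ((E.neg).boxP) :=
        .mp (.ax (q_dne (E.neg.boxP))) (.hyp (.head _))
      have b2 : QCtx [E.diaP.neg, E.diaP.diaP] ((E.neg).boxP.boxP) :=
        .mp (.ax (q_fourP E.neg)) b1
      have b3 : QCtx [E.diaP.neg, E.diaP.diaP] ((E.diaP.neg).boxP) :=
        .mp (.ax (boxMonoP (q_dni (E.neg.boxP)))) b2
      exact .mp (.hyp (.tail _ (.head _))) b3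
    exact q_imp_trans s1 (boxMonoF s2)

/-- From `⊢ □F r → W` conclude `⊢ □F (□F r → □F W)`. -/
lemma boxbox {r W : TForm} (h : QoS4t (r.boxF.impl W)) :
    QoS4t ((r.boxF.impl W.boxF).boxF) := by
  have n2 : QoS4t (r.boxF.boxF.impl W.boxF) :=
    QoS4t.mp _ _ (q_kF r.boxF W) (QoS4t.necF _ h)
  exact QoS4t.necF _ (q_imp_trans (q_fourF r) n2)

/-- For all formulas `A, B` of `L`: if `x` is not free in `A`, then
`□F(□F ∀x □F(A^t → B^t) → □F(A^t → □F ∀x B^t))` is provable in Q∘S4.t; and if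
`x` is not free in `B`, then `□F(□F ∀x □F(A^t → B^t) → □F(◇P ∃x A^t → B^t))` is
provable in Q∘S4.t. -/
theorem translation_of_quantifier_axioms_provable (A B : IForm) (x : ℕ) :
    (x ∉ A.freeVars →
      QoS4t (TForm.boxF ((TForm.boxF (TForm.all x (TForm.boxF (A.t.impl B.t)))).impl
        (TForm.boxF (A.t.impl (TForm.boxF (TForm.all x B.t))))))) ∧
    (x ∉ B.freeVars →
      QoS4t (TForm.boxF ((TForm.boxF (TForm.all x (TForm.boxF (A.t.impl B.t)))).impl
        (TForm.boxF ((TForm.diaP (TForm.ex x A.t)).impl B.t))))) := by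
  have p : TForm := A.t
  constructor
  · -- first conjunct
    intro hA
    set p := A.t with hp
    set q := B.t with hq
    set C : TForm := (p.impl q).boxF with hC
    set φ : TForm := TForm.all x C with hφ
    have h1 : QoS4t (p.impl p.boxF) := t_box A
    have h2 : QoS4t (φ.impl (TForm.all x (p.impl q))) := allMono x (q_tF (p.impl q))
    have h3 := QoS4t.distrib x p q
    have h4 : QoS4t (p.impl (TForm.all x p)) := by
      refine QoS4t.vac x p ?_
      rw [hp, t_freeVars]; exact hA
    have d5 : QoS4t (p.impl (φ.impl (TForm.all x q))) :=
      QCtx.toThm <| .ded <| .ded <|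
        .mp (.mp (.ax h3) (.mp (.ax h2) (.hyp (.head _))))
          (.mp (.ax h4) (.hyp (.tail _ (.head _))))
    have d7 : QoS4t (p.boxF.impl (φ.boxF.impl ((TForm.all x q).boxF))) := by
      refine QCtx.toThm (QCtx.ded (QCtx.ded ?_))
      -- context: [□F φ, □F p]
      have t2 : QCtx [φ.boxF, p.boxF] ((φ.impl (TForm.all x q)).boxF) :=
        .mp (.mp (.ax (q_kF p (φ.impl (TForm.all x q)))) (.ax (QoS4t.necF _ d5)))
          (.hyp (.tail _ (.head _)))
      exact .mp (.mp (.ax (q_kF φ (TForm.all x q))) t2) (.hyp (.head _))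
    have τ1 : QoS4t (φ.boxF.impl (p.impl ((TForm.all x q).boxF))) := by
      refine QCtx.toThm (QCtx.ded (QCtx.ded ?_))
      -- context: [p, □F φ]
      exact .mp (.mp (.ax d7) (.mp (.ax h1) (.hyp (.head _)))) (.hyp (.tail _ (.head _)))
    exact boxbox τ1
  · -- second conjunct
    intro hB
    set p := A.t with hp
    set q := B.t with hq
    set C : TForm := (p.impl q).boxF with hC
    set φ : TForm := TForm.all x C with hφ
    set X : TForm := φ.boxF with hX
    set N : TForm := q.neg with hN
    set Y : TForm := X.and N with hY
    set m : TForm := TForm.all x p.neg with hm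
    have hxq : x ∉ q.freeVars := by rw [hq, t_freeVars]; exact hB
    have u1 : QoS4t (TForm.all x (φ.impl C)) := ui_self x C
    have u2 : QoS4t (TForm.all x ((φ.impl C).boxF)) :=
      QoS4t.mp _ _ (QoS4t.cbfF x (φ.impl C)) (QoS4t.necF _ u1)
    have θ : QoS4t ((φ.impl C).impl (p.impl Y.neg)) := by
      refine QCtx.toThm (QCtx.ded (QCtx.ded (QCtx.ded ?_)))
      -- context: [Y, p, φ → C]
      have hX' : QCtx [Y, p, φ.impl C] X := .mp (.ax (q_and1 X N)) (.hyp (.head _))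
      have hN' : QCtx [Y, p, φ.impl C] N := .mp (.ax (q_and2 X N)) (.hyp (.head _))
      have hφ' : QCtx [Y, p, φ.impl C] φ := .mp (.ax (q_tF φ)) hX'
      have hC' : QCtx [Y, p, φ.impl C] C :=
        .mp (.hyp (.tail _ (.tail _ (.head _)))) hφ'
      have hpq' : QCtx [Y, p, φ.impl C] (p.impl q) := .mp (.ax (q_tF (p.impl q))) hC'
      exact .mp hN' (.mp hpq' (.hyp (.tail _ (.head _))))
    have sigma : QoS4t (((φ.impl C).boxF).impl ((Y.diaF).impl p.neg)) := by
      refine QCtx.toThm (QCtx.ded (QCtx.ded (QCtx.ded ?_)))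
      -- context: [p, ◇F Y, □F(φ → C)]
      have bp : QCtx [p, Y.diaF, (φ.impl C).boxF] p.boxF :=
        .mp (.ax (t_box A)) (.hyp (.head _))
      have k2 : QCtx [p, Y.diaF, (φ.impl C).boxF] ((p.impl Y.neg).boxF) :=
        .mp (.mp (.ax (q_kF (φ.impl C) (p.impl Y.neg))) (.ax (QoS4t.necF _ θ)))
          (.hyp (.tail _ (.tail _ (.head _))))
      have k3 : QCtx [p, Y.diaF, (φ.impl C).boxF] ((Y.neg).boxF) :=
        .mp (.mp (.ax (q_kF p Y.neg)) k2) bp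
      exact .mp (.hyp (.tail _ (.head _))) k3
    have u4 : QoS4t (TForm.all x ((Y.diaF).impl p.neg)) :=
      QoS4t.mp _ _ (allMono x sigma) u2
    have u5 : QoS4t ((TForm.all x (Y.diaF)).impl m) :=
      QoS4t.mp _ _ (QoS4t.distrib x (Y.diaF) p.neg) u4
    have u6 : QoS4t ((Y.diaF).impl (TForm.all x (Y.diaF))) := by
      refine QoS4t.vac x (Y.diaF) ?_
      simp [hY, hX, hN, hφ, TForm.diaF, TForm.and, TForm.neg, TForm.freeVars, hxq]
    have u7 : QoS4t ((Y.diaF).impl m) := q_imp_trans u6 u5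
    have u10 : QoS4t (Y.impl m.boxP) := q_imp_trans (q_tense1 Y) (boxMonoP u7)
    have τ2 : QoS4t (X.impl (((m.neg).diaP).impl q)) := by
      refine QCtx.toThm (QCtx.ded (QCtx.ded (QCtx.bc ?_)))
      -- context: [¬q, ◇P ¬m, X]
      have y : QCtx [q.neg, (m.neg).diaP, X] Y :=
        .mp (.mp (.ax (q_andI X N)) (.hyp (.tail _ (.tail _ (.head _))))) (.hyp (.head _))
      have bmm : QCtx [q.neg, (m.neg).diaP, X] ((m.neg.neg).boxP) :=
        .mp (.ax (boxMonoP (q_dni m))) (.mp (.ax u10) y)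
      exact .mp (.hyp (.tail _ (.head _))) bmm
    exact boxbox τ2
end
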